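/- arXiv:1610.01451 — 5 statements merged into one kernel-verified Lean document; each statement's English description precedes it below -/
import Mathlib

section
/- Let f : ℝ → ℝ be f(x) = |x|. Then for every λ > 0, the upper compensated convex transform satisfies C^u_λ(f)(x) = λx² + 1/(4λ) for |x| ≤ 1/(2λ) and C^u_λ(f)(x) = |x| for |x| ≥ 1/(2λ). -/
open Filter Metric Set
open scoped Topology RealInnerProductSpace

/-- The convex envelope of `g`: pointwise supremum of convex functions below `g`. -/
noncomputable def convEnv {E : Type*} [NormedAddCommGroup E] [NormedSpace ℝ E]
    (g : E → ℝ) (x : E) : ℝ :=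
  sSup {y : ℝ | ∃ h : E → ℝ, ConvexOn ℝ Set.univ h ∧ (∀ z, h z ≤ g z) ∧ y = h x}

/-- Upper compensated convex transform. -/
noncomputable def upperT {E : Type*} [NormedAddCommGroup E] [NormedSpace ℝ E]
    (lam : ℝ) (g : E → ℝ) (x : E) : ℝ :=
  lam * ‖x‖ ^ 2 - convEnv (fun y => lam * ‖y‖ ^ 2 - g y) x

/-- Lower compensated convex transform. -/
noncomputable def lowerT {E : Type*} [NormedAddCommGroup E] [NormedSpace ℝ E]
    (lam : ℝ) (g : E → ℝ) (x : E) : ℝ :=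
  convEnv (fun y => g y + lam * ‖y‖ ^ 2) x - lam * ‖x‖ ^ 2

/-! For `g y = λ y² - |y|`, the convex envelope fills the well of `g` between its two minimum
points `±1/(2λ)` at the minimum level `-1/(4λ)`: on that segment every convex minorant is bounded
by its values at the endpoints. Outside the segment, the tangent line of `g` at `x` stays below `g`
(across the origin by AM–GM), so the envelope equals `g` there. -/

section ConvexEnvelope

variable {E : Type*} [NormedAddCommGroup E] [NormedSpace ℝ E]

theorem le_convEnv {g h : E → ℝ} (hconv : ConvexOn ℝ univ h) (hle : ∀ z, h z ≤ g z) (x : E) :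
    h x ≤ convEnv g x :=
  le_csSup ⟨g x, by rintro _ ⟨h', -, hle', rfl⟩; exact hle' x⟩ ⟨h, hconv, hle, rfl⟩

theorem convEnv_le_of_forall {g h : E → ℝ} (hconv : ConvexOn ℝ univ h) (hle : ∀ z, h z ≤ g z)
    {x : E} {b : ℝ} (hb : ∀ h' : E → ℝ, ConvexOn ℝ univ h' → (∀ z, h' z ≤ g z) → h' x ≤ b) :
    convEnv g x ≤ b :=
  csSup_le ⟨h x, h, hconv, hle, rfl⟩ <| by rintro _ ⟨h', hconv', hle', rfl⟩; exact hb h' hconv' hle'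

theorem convEnv_eq_self_of_convexOn_le {g h : E → ℝ} (hconv : ConvexOn ℝ univ h)
    (hle : ∀ z, h z ≤ g z) {x : E} (hx : h x = g x) : convEnv g x = g x :=
  (convEnv_le_of_forall hconv hle fun _ _ hle' => hle' x).antisymm (hx ▸ le_convEnv hconv hle x)

theorem convEnv_eq_of_mem_segment {g : E → ℝ} {m : ℝ} (hm : ∀ z, m ≤ g z) {a b x : E}
    (ha : g a = m) (hb : g b = m) (hx : x ∈ segment ℝ a b) : convEnv g x = m := by
  refine le_antisymm (convEnv_le_of_forall (convexOn_const m convex_univ) hm ?_)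
    (le_convEnv (convexOn_const m convex_univ) hm x)
  intro h hconv hle
  calc h x ≤ max (h a) (h b) := hconv.le_on_segment (mem_univ a) (mem_univ b) hx
    _ ≤ m := max_le (ha ▸ hle a) (hb ▸ hle b)

end ConvexEnvelope

section SqSubAbs

variable {lam : ℝ}

theorem neg_inv_four_mul_le_sq_sub_abs (hlam : 0 < lam) (y : ℝ) :
    -(1 / (4 * lam)) ≤ lam * y ^ 2 - |y| := by
  have h : lam * y ^ 2 - |y| + 1 / (4 * lam) = lam * (|y| - 1 / (2 * lam)) ^ 2 := by
    rw [← sq_abs y]; field_simp; ring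
  linarith [mul_nonneg hlam.le (sq_nonneg (|y| - 1 / (2 * lam)))]

theorem sq_sub_abs_of_abs_eq (hlam : 0 < lam) {y : ℝ} (hy : |y| = 1 / (2 * lam)) :
    lam * y ^ 2 - |y| = -(1 / (4 * lam)) := by
  rw [← sq_abs, hy]; field_simp; ring

theorem tangent_le_sq_sub_abs (hlam : 0 < lam) {x : ℝ} (hx : 1 ≤ 2 * lam * x) (y : ℝ) :
    (2 * lam * x - 1) * y - lam * x ^ 2 ≤ lam * y ^ 2 - |y| := by
  rcases le_total 0 y with hy | hy
  · rw [abs_of_nonneg hy]; nlinarith [mul_nonneg hlam.le (sq_nonneg (y - x))]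
  · rw [abs_of_nonpos hy]
    nlinarith [mul_nonneg hlam.le (sq_nonneg (x + y)),
      mul_nonneg (sub_nonneg.2 hx) (neg_nonneg.2 hy)]

theorem exists_affine_le_sq_sub_abs (hlam : 0 < lam) {x : ℝ} (hx : 1 ≤ 2 * lam * |x|) :
    ∃ a b : ℝ, (∀ y, a * y + b ≤ lam * y ^ 2 - |y|) ∧ a * x + b = lam * x ^ 2 - |x| := by
  rcases le_total 0 x with hx0 | hx0
  · rw [abs_of_nonneg hx0] at hx ⊢
    exact ⟨2 * lam * x - 1, -(lam * x ^ 2), fun y => tangent_le_sq_sub_abs hlam hx y, by ring⟩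
  · rw [abs_of_nonpos hx0] at hx ⊢
    refine ⟨-(2 * lam * -x - 1), -(lam * x ^ 2), fun y => ?_, by ring⟩
    have h := tangent_le_sq_sub_abs hlam hx (-y)
    rw [abs_neg, neg_sq] at h
    linarith

end SqSubAbs

theorem stmt_0 (lam : ℝ) (hlam : 0 < lam) (x : ℝ) :
    (|x| ≤ 1 / (2 * lam) → upperT lam (fun y => |y|) x = lam * x ^ 2 + 1 / (4 * lam)) ∧
    (|x| ≥ 1 / (2 * lam) → upperT lam (fun y => |y|) x = |x|) := by
  have hg : (fun y : ℝ => lam * ‖y‖ ^ 2 - |y|) = fun y => lam * y ^ 2 - |y| := by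
    simp only [Real.norm_eq_abs, sq_abs]
  have hc : |1 / (2 * lam)| = 1 / (2 * lam) := abs_of_pos (by positivity)
  unfold upperT
  rw [hg, Real.norm_eq_abs, sq_abs]
  constructor
  · intro hx
    have hseg : x ∈ segment ℝ (-(1 / (2 * lam))) (1 / (2 * lam)) := by
      rw [segment_eq_Icc (by linarith [abs_nonneg x])]; exact abs_le.1 hx
    rw [convEnv_eq_of_mem_segment (neg_inv_four_mul_le_sq_sub_abs hlam)
      (sq_sub_abs_of_abs_eq hlam (by rwa [abs_neg])) (sq_sub_abs_of_abs_eq hlam hc) hseg]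
    ring
  · intro hx
    obtain ⟨a, b, hle, hxab⟩ := exists_affine_le_sq_sub_abs hlam (x := x) <| by
      rw [ge_iff_le, div_le_iff₀ (by positivity)] at hx; linarith
    have hconv : ConvexOn ℝ univ fun y : ℝ => a * y + b :=
      ((LinearMap.mul ℝ ℝ a).convexOn convex_univ).add (convexOn_const b convex_univ)
    rw [convEnv_eq_self_of_convexOn_le hconv hle hxab]
    ring
end

section
/- Let f : ℝⁿ → ℝ be Lipschitz with constant L ≥ 0. Then for every λ > 0 and every x ∈ ℝⁿ: C^l_λ(f)(x) ≤ f(x) ≤ C^l_λ(f)(x) + L²/(4λ), and C^u_λ(f)(x) − L²/(4λ) ≤ f(x) ≤ C^u_λ(f)(x). -/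
open Filter Metric Set
open scoped Topology RealInnerProductSpace

lemma aux_aff_convexOn {E : Type*} [NormedAddCommGroup E] [InnerProductSpace ℝ E]
    (c a : ℝ) (v : E) : ConvexOn ℝ Set.univ (fun y : E => c + a * ⟪v, y⟫) := by
  refine ⟨convex_univ, ?_⟩
  intro y _ z _ p q hp hq hpq
  simp only [inner_add_right, inner_smul_right, smul_eq_mul]
  have hq1 : q = 1 - p := by linarith
  rw [hq1]; apply le_of_eq; ring

lemma aux_le_convEnv {E : Type*} [NormedAddCommGroup E] [NormedSpace ℝ E]
    (g h : E → ℝ) (hc : ConvexOn ℝ Set.univ h) (hle : ∀ z, h z ≤ g z) (x : E) :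
    h x ≤ convEnv g x := by
  refine le_csSup ⟨g x, ?_⟩ ⟨h, hc, hle, rfl⟩
  rintro y ⟨h', _, hle', rfl⟩; exact hle' x

lemma aux_convEnv_le {E : Type*} [NormedAddCommGroup E] [NormedSpace ℝ E]
    (g h : E → ℝ) (hc : ConvexOn ℝ Set.univ h) (hle : ∀ z, h z ≤ g z) (x : E) :
    convEnv g x ≤ g x := by
  have hmem : h x ∈ {y : ℝ | ∃ h' : E → ℝ,
      ConvexOn ℝ Set.univ h' ∧ (∀ z, h' z ≤ g z) ∧ y = h' x} := ⟨h, hc, hle, rfl⟩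
  exact csSup_le ⟨h x, hmem⟩ (by rintro y ⟨h', _, hle', rfl⟩; exact hle' x)

theorem stmt_2 {n : ℕ} (f : EuclideanSpace ℝ (Fin n) → ℝ) (L : ℝ) (hL : 0 ≤ L)
    (hf : ∀ x y, |f x - f y| ≤ L * ‖x - y‖) (lam : ℝ) (hlam : 0 < lam)
    (x : EuclideanSpace ℝ (Fin n)) :
    (lowerT lam f x ≤ f x ∧ f x ≤ lowerT lam f x + L ^ 2 / (4 * lam)) ∧
    (upperT lam f x - L ^ 2 / (4 * lam) ≤ f x ∧ f x ≤ upperT lam f x) := by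
  have key : ∀ y : EuclideanSpace ℝ (Fin n),
      |f x - f y| ≤ L ^ 2 / (4 * lam) + lam * ‖y - x‖ ^ 2 := by
    intro y
    have h1 := hf x y
    have h2 : ‖x - y‖ = ‖y - x‖ := by rw [norm_sub_rev]
    calc |f x - f y| ≤ L * ‖y - x‖ := by rw [← h2]; exact h1
      _ ≤ L ^ 2 / (4 * lam) + lam * ‖y - x‖ ^ 2 := by
          rw [div_add' _ _ _ (by positivity), le_div_iff₀ (by positivity)]
          nlinarith [sq_nonneg (2 * lam * ‖y - x‖ - L)]
  have expand : ∀ y : EuclideanSpace ℝ (Fin n),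
      lam * ‖y - x‖ ^ 2 = lam * ‖y‖ ^ 2 - 2 * lam * ⟪x, y⟫ + lam * ‖x‖ ^ 2 := by
    intro y
    rw [norm_sub_sq_real, real_inner_comm]
    ring
  have hinx : ⟪x, x⟫ = ‖x‖ ^ 2 := real_inner_self_eq_norm_sq x
  -- lower transform
  have hconv₁ := aux_aff_convexOn (E := EuclideanSpace ℝ (Fin n))
    (f x - L ^ 2 / (4 * lam) - lam * ‖x‖ ^ 2) (2 * lam) x
  have hle₁ : ∀ z, (f x - L ^ 2 / (4 * lam) - lam * ‖x‖ ^ 2) + 2 * lam * ⟪x, z⟫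
      ≤ f z + lam * ‖z‖ ^ 2 := by
    intro z
    have h4 : f x - f z ≤ L ^ 2 / (4 * lam) + lam * ‖z - x‖ ^ 2 :=
      le_trans (le_abs_self _) (key z)
    have h5 := expand z
    linarith
  have hlow_ge := aux_le_convEnv (fun y => f y + lam * ‖y‖ ^ 2) _ hconv₁ hle₁ x
  have hlow_le := aux_convEnv_le (fun y => f y + lam * ‖y‖ ^ 2) _ hconv₁ hle₁ x
  simp only [hinx] at hlow_ge
  -- upper transform
  have hconv₂ := aux_aff_convexOn (E := EuclideanSpace ℝ (Fin n))
    (-f x - L ^ 2 / (4 * lam) - lam * ‖x‖ ^ 2) (2 * lam) x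
  have hle₂ : ∀ z, (-f x - L ^ 2 / (4 * lam) - lam * ‖x‖ ^ 2) + 2 * lam * ⟪x, z⟫
      ≤ lam * ‖z‖ ^ 2 - f z := by
    intro z
    have h4 : f z - f x ≤ L ^ 2 / (4 * lam) + lam * ‖z - x‖ ^ 2 := by
      have := key z
      have habs : f z - f x ≤ |f x - f z| := by
        rw [abs_sub_comm]; exact le_abs_self _
      linarith
    have h5 := expand z
    linarith
  have hup_ge := aux_le_convEnv (fun y => lam * ‖y‖ ^ 2 - f y) _ hconv₂ hle₂ x
  have hup_le := aux_convEnv_le (fun y => lam * ‖y‖ ^ 2 - f y) _ hconv₂ hle₂ x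
  simp only [hinx] at hup_ge
  simp only [lowerT, upperT]
  refine ⟨⟨by linarith, by linarith⟩, by linarith, by linarith⟩
end

section
/- Let K ⊂ ℝⁿ be a nonempty compact set with diameter d. Then there is a unique closed ball of smallest radius containing K, and its radius r satisfies r ≤ d·√(n/(2(n+1))). -/
/-!
The radius function `c ↦ sup_{x ∈ K} ‖x - c‖` is continuous and coercive, so it attains its
minimum; two minimal balls with distinct centres would give, by the parallelogram law, a smaller
ball around the midpoint of the centres.

For Jung's bound, the centre `c` of the minimal ball `B̄_r(c)` lies in the closed convex hull of
the contact points `K ∩ ∂B̄_r(c)`: otherwise a hyperplane separates `c` from them, and moving `c`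
slightly towards their side shrinks the ball. If `p = ∑ wᵢ zᵢ` is a convex combination of
contact points, at most `n + 1` of them by Carathéodory, then
`∑ᵢⱼ wᵢ wⱼ ‖zᵢ - zⱼ‖² = 2 (r² - ‖p - c‖²)`, while the left side is at most
`d² (1 - ∑ wᵢ²) ≤ d² n / (n + 1)`. Letting `p → c` gives `2 r² ≤ d² n / (n + 1)`.
-/

open Filter Metric Set
open scoped Topology RealInnerProductSpace

/-- `(c, r)` is a minimal bounding ball of `K`: the closed ball `B̄_r(c)` contains `K`
and has the smallest radius among all closed balls containing `K`. -/
def IsMinBall {E : Type*} [NormedAddCommGroup E] (K : Set E) (c : E) (r : ℝ) : Prop :=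
  0 ≤ r ∧ K ⊆ Metric.closedBall c r ∧ ∀ c' r', K ⊆ Metric.closedBall c' r' → r ≤ r'

theorem IsCompact.exists_lt_subset_closedBall {α : Type*} [PseudoMetricSpace α] {K : Set α}
    (hK : IsCompact K) {c : α} {r : ℝ} (h : K ⊆ ball c r) : ∃ r' < r, K ⊆ closedBall c r' := by
  rcases K.eq_empty_or_nonempty with rfl | hne
  · exact ⟨r - 1, by linarith, empty_subset _⟩
  obtain ⟨y, hy, hmax⟩ := hK.exists_isMaxOn hne (continuous_id.dist continuous_const).continuousOn
  exact ⟨dist y c, h hy, fun x hx => hmax hx⟩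

namespace IsMinBall

variable {E : Type*} [NormedAddCommGroup E] {K : Set E} {c : E} {r : ℝ}

theorem nonempty (h : IsMinBall K c r) : K.Nonempty := by
  by_contra hK
  rw [not_nonempty_iff_eq_empty] at hK
  linarith [h.2.2 c (r - 1) (hK ▸ empty_subset _)]

end IsMinBall

theorem exists_isMinBall {E : Type*} [NormedAddCommGroup E] [ProperSpace E] {K : Set E}
    (hK : K.Nonempty) (hKc : IsCompact K) : ∃ c r, IsMinBall K c r := by
  set f : E → ℝ := fun c => sSup (dist c '' K)
  have hf : Continuous f := hKc.continuous_sSup continuous_dist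
  have dist_le_f : ∀ c, ∀ x ∈ K, dist c x ≤ f c := fun c x hx =>
    le_csSup (hKc.bddAbove_image (continuous_const.dist continuous_id).continuousOn)
      (mem_image_of_mem _ hx)
  have f_le : ∀ c r, K ⊆ closedBall c r → f c ≤ r := fun c r h =>
    csSup_le (hK.image _) <| forall_mem_image.2 fun x hx => by
      rw [dist_comm]; exact h hx
  obtain ⟨x₀, hx₀⟩ := hK
  have hbdd : Bornology.IsBounded {c | f c ≤ f x₀} :=
    isBounded_closedBall.subset fun c hc =>
      mem_closedBall.2 ((dist_le_f c x₀ hx₀).trans hc)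
  obtain ⟨c, hc⟩ := hf.exists_forall_le_of_isBounded x₀ hbdd
  refine ⟨c, f c, dist_nonneg.trans (dist_le_f c x₀ hx₀), fun x hx => ?_,
    fun c' r' h => (hc c').trans (f_le c' r' h)⟩
  rw [mem_closedBall, dist_comm]
  exact dist_le_f c x hx

section InnerProductSpace

variable {E : Type*} [NormedAddCommGroup E] [InnerProductSpace ℝ E]

theorem IsMinBall.unique {K : Set E} {c₁ c₂ : E} {r₁ r₂ : ℝ} (h₁ : IsMinBall K c₁ r₁)
    (h₂ : IsMinBall K c₂ r₂) : c₁ = c₂ ∧ r₁ = r₂ := by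
  obtain rfl : r₁ = r₂ := le_antisymm (h₁.2.2 c₂ r₂ h₂.2.1) (h₂.2.2 c₁ r₁ h₁.2.1)
  refine ⟨?_, rfl⟩
  set m := midpoint ℝ c₁ c₂
  have hm : ∀ x ∈ K, dist x m ^ 2 ≤ r₁ ^ 2 - (dist c₁ c₂ / 2) ^ 2 := fun x hx => by
    have :=
      EuclideanGeometry.dist_sq_add_dist_sq_eq_two_mul_dist_midpoint_sq_add_half_dist_sq x c₁ c₂
    have h₁x := mem_closedBall.1 (h₁.2.1 hx)
    have h₂x := mem_closedBall.1 (h₂.2.1 hx)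
    nlinarith [dist_nonneg (x := x) (y := c₁), dist_nonneg (x := x) (y := c₂)]
  obtain ⟨x, hx⟩ := h₁.nonempty
  have hpos : 0 ≤ r₁ ^ 2 - (dist c₁ c₂ / 2) ^ 2 := (sq_nonneg _).trans (hm x hx)
  have hr : r₁ ≤ √(r₁ ^ 2 - (dist c₁ c₂ / 2) ^ 2) :=
    h₁.2.2 m _ fun y hy => mem_closedBall.2 (Real.le_sqrt_of_sq_le (hm y hy))
  rw [Real.le_sqrt h₁.1 hpos] at hr
  exact dist_eq_zero.1 (by nlinarith [dist_nonneg (x := c₁) (y := c₂)])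

theorem exists_subset_closedBall_radius_lt {K : Set E} (hKc : IsCompact K) {c : E} {r : ℝ}
    (hK : K ⊆ closedBall c r) (v : E) {δ : ℝ} (hδ : 0 < δ)
    (hv : ∀ x ∈ K, dist x c = r → δ ≤ ⟪v, x - c⟫) :
    ∃ c', ∃ r' < r, K ⊆ closedBall c' r' := by
  -- `B` is compact and misses the sphere, so a small shift of the centre by `t • v` keeps it
  -- inside the ball, while the points of `K` outside `B` get strictly closer to the new centre.
  set B := K ∩ {x | ⟪v, x - c⟫ ≤ δ / 2}
  have hBc : IsCompact B := hKc.inter_right (isClosed_le (by fun_prop) continuous_const)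
  obtain ⟨rB, hrB, hB⟩ : ∃ rB < r, B ⊆ closedBall c rB := by
    refine hBc.exists_lt_subset_closedBall fun x hx => ?_
    refine mem_ball.2 ((mem_closedBall.1 (hK hx.1)).lt_of_ne fun hxr => ?_)
    linarith [hv x hx.1 hxr, show ⟪v, x - c⟫ ≤ δ / 2 from hx.2]
  obtain ⟨t, ⟨ht₁, ht₂⟩, ht₀⟩ : ∃ t : ℝ, (t * ‖v‖ < r - rB ∧ t * ‖v‖ ^ 2 < δ) ∧ 0 < t := by
    have hlim (a : ℝ) : Tendsto (fun t : ℝ => t * a) (𝓝[>] 0) (𝓝 0) :=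
      ((continuous_mul_const a).tendsto' 0 0 (zero_mul a)).mono_left nhdsWithin_le_nhds
    exact (((hlim _).eventually (gt_mem_nhds (sub_pos.2 hrB))).and
      ((hlim _).eventually (gt_mem_nhds hδ))).and self_mem_nhdsWithin |>.exists
  suffices K ⊆ ball (c + t • v) r from ⟨_, hKc.exists_lt_subset_closedBall this⟩
  intro x hx
  rw [mem_ball]
  by_cases hxB : x ∈ B
  · calc dist x (c + t • v) ≤ dist x c + dist c (c + t • v) := dist_triangle _ _ _
      _ ≤ rB + t * ‖v‖ := by
        gcongr
        · exact hB hxB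
        · rw [dist_self_add_right, norm_smul, Real.norm_of_nonneg ht₀.le]
      _ < r := by linarith
  · have hδx : δ / 2 < ⟪v, x - c⟫ := lt_of_not_ge fun h => hxB ⟨hx, h⟩
    have hxc := mem_closedBall.1 (hK hx)
    have hexp :
        dist x (c + t • v) ^ 2 = dist x c ^ 2 - 2 * t * ⟪v, x - c⟫ + t ^ 2 * ‖v‖ ^ 2 := by
      rw [dist_eq_norm, dist_eq_norm, show x - (c + t • v) = (x - c) - t • v by abel,
        norm_sub_sq_real, real_inner_smul_right, norm_smul, Real.norm_of_nonneg ht₀.le,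
        real_inner_comm]
      ring
    refine (pow_lt_pow_iff_left₀ dist_nonneg (dist_nonneg.trans hxc) two_ne_zero).1 ?_
    rw [hexp]
    nlinarith [dist_nonneg (x := x) (y := c)]

theorem IsMinBall.mem_closedConvexHull [CompleteSpace E] {K : Set E} {c : E} {r : ℝ}
    (hKc : IsCompact K) (h : IsMinBall K c r) : c ∈ closedConvexHull ℝ (K ∩ sphere c r) := by
  by_contra hc
  obtain ⟨f, u, hfc, hf⟩ :=
    geometric_hahn_banach_point_closed convex_closedConvexHull isClosed_closedConvexHull hc
  set v := (InnerProductSpace.toDual ℝ E).symm f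
  have hv : ∀ x ∈ K, dist x c = r → u - f c ≤ ⟪v, x - c⟫ := fun x hx hxr => by
    rw [InnerProductSpace.toDual_symm_apply, map_sub]
    linarith [hf x (subset_closedConvexHull ⟨hx, hxr⟩)]
  obtain ⟨c', r', hr', hK⟩ :=
    exists_subset_closedBall_radius_lt hKc h.2.1 v (sub_pos.2 hfc) hv
  exact hr'.not_ge (h.2.2 c' r' hK)

theorem sum_sum_mul_norm_sub_sq {ι : Type*} (s : Finset ι) {w : ι → ℝ} (hw : ∑ i ∈ s, w i = 1)
    (z : ι → E) (c : E) :
    ∑ i ∈ s, ∑ j ∈ s, w i * w j * ‖z i - z j‖ ^ 2 =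
      2 * (∑ i ∈ s, w i * ‖z i - c‖ ^ 2 - ‖∑ i ∈ s, w i • z i - c‖ ^ 2) := by
  have hcenter : ∑ i ∈ s, w i • z i - c = ∑ i ∈ s, w i • (z i - c) := by
    simp only [smul_sub, Finset.sum_sub_distrib, ← Finset.sum_smul, hw, one_smul]
  have hcross : ‖∑ i ∈ s, w i • (z i - c)‖ ^ 2 =
      ∑ i ∈ s, ∑ j ∈ s, w i * w j * ⟪z i - c, z j - c⟫ := by
    simp only [← real_inner_self_eq_norm_sq, sum_inner, inner_sum, real_inner_smul_left,
      real_inner_smul_right, mul_assoc]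
    rw [Finset.sum_comm]
    exact Finset.sum_congr rfl fun i _ => Finset.sum_congr rfl fun j _ => by ring
  have hterm (i j : ι) : ‖z i - z j‖ ^ 2 =
      ‖z i - c‖ ^ 2 - 2 * ⟪z i - c, z j - c⟫ + ‖z j - c‖ ^ 2 := by
    rw [← norm_sub_sq_real, sub_sub_sub_cancel_right]
  have hsq : ∑ i ∈ s, ∑ j ∈ s, w i * w j * ‖z j - c‖ ^ 2 = ∑ j ∈ s, w j * ‖z j - c‖ ^ 2 := by
    rw [Finset.sum_comm]
    simp only [mul_assoc, ← Finset.sum_mul, hw, one_mul]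
  simp only [hcenter, hcross, hterm, mul_add, mul_sub, Finset.sum_add_distrib,
    Finset.sum_sub_distrib, ← Finset.sum_mul, ← Finset.mul_sum, hw, hsq]
  simp only [mul_one, mul_left_comm _ (2 : ℝ), ← Finset.mul_sum]
  ring

theorem two_mul_sq_sub_dist_sq_le_of_mem_convexHull [FiniteDimensional ℝ E] {S : Set E}
    {c p : E} {r d : ℝ} (hS : S ⊆ sphere c r) (hd : ∀ x ∈ S, ∀ y ∈ S, dist x y ≤ d)
    (hp : p ∈ convexHull ℝ S) :
    2 * (r ^ 2 - dist p c ^ 2) ≤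
      d ^ 2 * (Module.finrank ℝ E / (Module.finrank ℝ E + 1)) := by
  classical
  obtain ⟨ι, _, z, w, hzS, hai, hw0, hw1, rfl⟩ := eq_pos_convex_span_of_mem_convexHull hp
  have hz (i : ι) : z i ∈ S := hzS (mem_range_self i)
  have hcard : (Fintype.card ι : ℝ) ≤ Module.finrank ℝ E + 1 := by
    exact_mod_cast hai.card_le_finrank_succ.trans (Nat.succ_le_succ (Submodule.finrank_le _))
  have hpair (i j : ι) : ‖z i - z j‖ ^ 2 ≤ d ^ 2 - if i = j then d ^ 2 else 0 := by
    split_ifs with hij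
    · simp [hij]
    · simpa [← dist_eq_norm] using pow_le_pow_left₀ dist_nonneg (hd _ (hz i) _ (hz j)) 2
  have hspread : ∑ i, ∑ j, w i * w j * ‖z i - z j‖ ^ 2 ≤ d ^ 2 * (1 - ∑ i, w i ^ 2) := by
    calc ∑ i, ∑ j, w i * w j * ‖z i - z j‖ ^ 2
        ≤ ∑ i, ∑ j, w i * w j * (d ^ 2 - if i = j then d ^ 2 else 0) := by
          gcongr with i _ j _
          · exact mul_nonneg (hw0 i).le (hw0 j).le
          · exact hpair i j
      _ = d ^ 2 * (1 - ∑ i, w i ^ 2) := by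
          simp only [mul_sub, mul_ite, mul_zero, Finset.sum_sub_distrib, ← Finset.sum_mul,
            ← Finset.mul_sum, hw1, mul_one, Finset.sum_ite_eq, Finset.mem_univ, ↓reduceIte, ← sq,
            one_mul, sub_right_inj]
          ring
  have hcs : 1 ≤ Fintype.card ι * ∑ i, w i ^ 2 := by
    simpa [hw1] using sq_sum_le_card_mul_sum_sq (s := Finset.univ) (f := w)
  have hr (i : ι) : ‖z i - c‖ = r := by simpa [dist_eq_norm] using hS (hz i)
  have hvar := sum_sum_mul_norm_sub_sq Finset.univ hw1 z c
  simp only [hr, ← Finset.sum_mul, hw1, one_mul] at hvar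
  have hweights : 1 - ∑ i, w i ^ 2 ≤ Module.finrank ℝ E / (Module.finrank ℝ E + 1) := by
    rw [le_div_iff₀ (by positivity)]
    nlinarith [Finset.sum_nonneg fun i (_ : i ∈ Finset.univ) => sq_nonneg (w i)]
  calc 2 * (r ^ 2 - dist (∑ i, w i • z i) c ^ 2)
      = ∑ i, ∑ j, w i * w j * ‖z i - z j‖ ^ 2 := by rw [hvar, dist_eq_norm]
    _ ≤ d ^ 2 * (1 - ∑ i, w i ^ 2) := hspread
    _ ≤ _ := by gcongr

namespace IsMinBall

variable [FiniteDimensional ℝ E] {K : Set E} {c : E} {r : ℝ}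

theorem two_mul_sq_le (hKc : IsCompact K) (h : IsMinBall K c r) :
    2 * r ^ 2 ≤ diam K ^ 2 * (Module.finrank ℝ E / (Module.finrank ℝ E + 1)) := by
  let T := {p : E | 2 * (r ^ 2 - dist p c ^ 2) ≤
    diam K ^ 2 * (Module.finrank ℝ E / (Module.finrank ℝ E + 1))}
  have hclosed : IsClosed T := isClosed_le (by fun_prop) continuous_const
  have hhull : convexHull ℝ (K ∩ sphere c r) ⊆ T := fun p hp =>
    two_mul_sq_sub_dist_sq_le_of_mem_convexHull inter_subset_right
      (fun x hx y hy => dist_le_diam_of_mem hKc.isBounded hx.1 hy.1) hp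
  have hc := h.mem_closedConvexHull hKc
  rw [closedConvexHull_eq_closure_convexHull] at hc
  simpa [T] using closure_minimal hhull hclosed hc

theorem radius_le_diam_mul_sqrt (hKc : IsCompact K) (h : IsMinBall K c r) :
    r ≤ diam K * √(Module.finrank ℝ E / (2 * (Module.finrank ℝ E + 1))) := by
  have hsq : r ^ 2 ≤ diam K ^ 2 * (Module.finrank ℝ E / (2 * (Module.finrank ℝ E + 1))) := by
    have := h.two_mul_sq_le hKc
    have : diam K ^ 2 * (Module.finrank ℝ E / (2 * (Module.finrank ℝ E + 1))) =
        diam K ^ 2 * (Module.finrank ℝ E / (Module.finrank ℝ E + 1)) / 2 := by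
      rw [mul_comm 2, ← div_div, mul_div_assoc]
    linarith
  calc r ≤ √(diam K ^ 2 * (Module.finrank ℝ E / (2 * (Module.finrank ℝ E + 1)))) :=
        Real.le_sqrt_of_sq_le hsq
    _ = _ := by rw [Real.sqrt_mul (sq_nonneg _), Real.sqrt_sq diam_nonneg]

end IsMinBall

end InnerProductSpace

theorem stmt_5 {n : ℕ} (K : Set (EuclideanSpace ℝ (Fin n))) (hK : K.Nonempty)
    (hKc : IsCompact K) :
    ∃! p : EuclideanSpace ℝ (Fin n) × ℝ, IsMinBall K p.1 p.2 ∧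
      p.2 ≤ Metric.diam K * Real.sqrt (n / (2 * (n + 1))) := by
  obtain ⟨c, r, h⟩ := exists_isMinBall hK hKc
  have hbound := h.radius_le_diam_mul_sqrt hKc
  rw [finrank_euclideanSpace_fin] at hbound
  refine ⟨(c, r), ⟨h, hbound⟩, ?_⟩
  rintro ⟨c', r'⟩ ⟨h', -⟩
  obtain ⟨rfl, rfl⟩ := h'.unique h
  rfl
end

section
/- Let f : ℝⁿ → ℝ be Lipschitz with constant L > 0, λ > 0 and x ∈ ℝⁿ. Then the convex envelope of y ↦ f(y) + λ|y−x|² at the point x equals the local convex envelope computed only over points in the closed ball B̄_{r_λ}(x), with r_λ = (2+√2)L/λ; i.e. conv(f + λ|·−x|²)(x) = inf{Σᵢ τᵢ (f(yᵢ) + λ|yᵢ−x|²) : τᵢ ≥ 0, Στᵢ = 1, Στᵢyᵢ = x, |yᵢ−x| ≤ r_λ, i = 1,…,n+1}. -/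
/-! Let `g = f + λ‖· - x‖²`, `B` the closed ball of radius `R = (2 + √2) L / λ` around `x`, and
`c` the infimum of convex combinations of values of `g` at points of `B` with barycenter `x`.
By Carathéodory, `n + 1` points suffice, and Jensen gives `conv g (x) ≤ c`. Conversely, this
local envelope is convex on the open ball, so it has a supporting affine function
`c + φ (· - x)` at `x`, which lies below `g` on the ball. Testing it at distance `L / (2λ)` gives
`φ ≤ 2L‖·‖`; since `λR ≥ 3L`, the quadratic growth of `g` beats `c + φ (· - x)` outside the
ball too, so this affine function is a global convex minorant of `g` and `c ≤ conv g (x)`. -/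

open Filter Metric Set
open scoped Topology RealInnerProductSpace

section LocalConvexEnvelope

variable {E : Type*} [NormedAddCommGroup E] [NormedSpace ℝ E]

def convexCombValues (ι : Type*) [Fintype ι] (K : Set E) (g : E → ℝ) (z : E) : Set ℝ :=
  {v | ∃ (τ : ι → ℝ) (y : ι → E), (∀ i, 0 ≤ τ i) ∧ ∑ i, τ i = 1 ∧ ∑ i, τ i • y i = z ∧
    (∀ i, y i ∈ K) ∧ v = ∑ i, τ i * g (y i)}

noncomputable def localConvEnv (K : Set E) (g : E → ℝ) (z : E) : ℝ :=
  sInf (⋃ k : ℕ, convexCombValues (Fin k) K g z)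

variable {K : Set E} {g : E → ℝ} {z : E} {v : ℝ}

theorem apply_mem_convexCombValues (hz : z ∈ K) : g z ∈ convexCombValues (Fin 1) K g z :=
  ⟨fun _ => 1, fun _ => z, fun _ => zero_le_one, by simp, by simp, fun _ => hz, by simp⟩

theorem le_of_mem_convexCombValues {ι : Type*} [Fintype ι] {C : ℝ} (hg : ∀ y ∈ K, C ≤ g y)
    (hv : v ∈ convexCombValues ι K g z) : C ≤ v := by
  obtain ⟨τ, y, hτ, h1, -, hyK, rfl⟩ := hv
  calc C = ∑ i, τ i * C := by rw [← Finset.sum_mul, h1, one_mul]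
    _ ≤ ∑ i, τ i * g (y i) :=
      Finset.sum_le_sum fun i _ => mul_le_mul_of_nonneg_left (hg _ (hyK i)) (hτ i)

theorem ConvexOn.le_of_mem_convexCombValues {ι : Type*} [Fintype ι] {s : Set E} {h : E → ℝ}
    (hh : ConvexOn ℝ s h) (hKs : K ⊆ s) (hhg : ∀ y ∈ K, h y ≤ g y)
    (hv : v ∈ convexCombValues ι K g z) : h z ≤ v := by
  obtain ⟨τ, y, hτ, h1, rfl, hyK, rfl⟩ := hv
  calc h (∑ i, τ i • y i) ≤ ∑ i, τ i • h (y i) :=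
        hh.map_sum_le (fun i _ => hτ i) h1 fun i _ => hKs (hyK i)
    _ ≤ ∑ i, τ i * g (y i) :=
        Finset.sum_le_sum fun i _ => mul_le_mul_of_nonneg_left (hhg _ (hyK i)) (hτ i)

theorem add_mem_convexCombValues {k₁ k₂ : ℕ} {z₁ z₂ : E} {v₁ v₂ a b : ℝ}
    (hv₁ : v₁ ∈ convexCombValues (Fin k₁) K g z₁) (hv₂ : v₂ ∈ convexCombValues (Fin k₂) K g z₂)
    (ha : 0 ≤ a) (hb : 0 ≤ b) (hab : a + b = 1) :
    a * v₁ + b * v₂ ∈ convexCombValues (Fin (k₁ + k₂)) K g (a • z₁ + b • z₂) := by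
  obtain ⟨τ₁, y₁, hτ₁, hs₁, rfl, hy₁, rfl⟩ := hv₁
  obtain ⟨τ₂, y₂, hτ₂, hs₂, rfl, hy₂, rfl⟩ := hv₂
  refine ⟨Fin.append (a • τ₁) (b • τ₂), Fin.append y₁ y₂, Fin.addCases ?_ ?_, ?_, ?_,
    Fin.addCases ?_ ?_, ?_⟩ <;>
    simp_all [Fin.sum_univ_add, ← Finset.mul_sum, ← Finset.smul_sum, mul_smul, mul_assoc,
      mul_nonneg]

theorem bddBelow_iUnion_convexCombValues {C : ℝ} (hg : ∀ y ∈ K, C ≤ g y) :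
    BddBelow (⋃ k : ℕ, convexCombValues (Fin k) K g z) :=
  ⟨C, fun _ hv => by
    obtain ⟨k, hk⟩ := mem_iUnion.1 hv
    exact le_of_mem_convexCombValues hg hk⟩

theorem localConvEnv_le_of_mem {k : ℕ} {C : ℝ} (hg : ∀ y ∈ K, C ≤ g y)
    (hv : v ∈ convexCombValues (Fin k) K g z) : localConvEnv K g z ≤ v :=
  csInf_le (bddBelow_iUnion_convexCombValues hg) (mem_iUnion_of_mem k hv)

theorem localConvEnv_le_apply {C : ℝ} (hg : ∀ y ∈ K, C ≤ g y) (hz : z ∈ K) :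
    localConvEnv K g z ≤ g z :=
  localConvEnv_le_of_mem hg (apply_mem_convexCombValues hz)

theorem le_localConvEnv {C : ℝ} (hg : ∀ y ∈ K, C ≤ g y) (hz : z ∈ K) :
    C ≤ localConvEnv K g z :=
  le_csInf ⟨g z, mem_iUnion_of_mem 1 (apply_mem_convexCombValues hz)⟩ fun _ hv => by
    obtain ⟨k, hk⟩ := mem_iUnion.1 hv
    exact le_of_mem_convexCombValues hg hk

theorem convexOn_localConvEnv {C : ℝ} (hK : Convex ℝ K) (hg : ∀ y ∈ K, C ≤ g y) :
    ConvexOn ℝ K (localConvEnv K g) := by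
  refine ⟨hK, fun z₁ hz₁ z₂ hz₂ a b ha hb hab => le_of_forall_pos_le_add fun ε hε => ?_⟩
  have hne : ∀ z ∈ K, (⋃ k : ℕ, convexCombValues (Fin k) K g z).Nonempty :=
    fun z hz => ⟨g z, mem_iUnion_of_mem 1 (apply_mem_convexCombValues hz)⟩
  obtain ⟨v₁, hv₁, hlt₁⟩ := exists_lt_of_csInf_lt (hne z₁ hz₁) (lt_add_of_pos_right
    (localConvEnv K g z₁) hε)
  obtain ⟨v₂, hv₂, hlt₂⟩ := exists_lt_of_csInf_lt (hne z₂ hz₂) (lt_add_of_pos_right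
    (localConvEnv K g z₂) hε)
  obtain ⟨k₁, hk₁⟩ := mem_iUnion.1 hv₁
  obtain ⟨k₂, hk₂⟩ := mem_iUnion.1 hv₂
  calc localConvEnv K g (a • z₁ + b • z₂) ≤ a * v₁ + b * v₂ :=
        localConvEnv_le_of_mem hg (add_mem_convexCombValues hk₁ hk₂ ha hb hab)
    _ ≤ a * (localConvEnv K g z₁ + ε) + b * (localConvEnv K g z₂ + ε) := by gcongr
    _ = a • localConvEnv K g z₁ + b • localConvEnv K g z₂ + ε := by
        rw [smul_eq_mul, smul_eq_mul, ← sub_eq_zero]; linear_combination ε * hab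

end LocalConvexEnvelope

theorem le_convEnv_s8 {E : Type*} [NormedAddCommGroup E] [NormedSpace ℝ E] {g h : E → ℝ}
    (hh : ConvexOn ℝ univ h) (hhg : ∀ y, h y ≤ g y) (x : E) : h x ≤ convEnv g x :=
  le_csSup ⟨g x, by rintro _ ⟨h', -, hle, rfl⟩; exact hle x⟩ ⟨h, hh, hhg, rfl⟩

theorem le_convEnv_of_affine_le {E : Type*} [NormedAddCommGroup E] [NormedSpace ℝ E]
    {g : E → ℝ} {c : ℝ} {x : E} {φ : E →L[ℝ] ℝ} (hg : ∀ y, c + φ (y - x) ≤ g y) :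
    c ≤ convEnv g x := by
  have hφ := (φ.toLinearMap.convexOn convex_univ).add_const (c - φ x)
  have haffine : ConvexOn ℝ univ fun y => c + φ (y - x) :=
    ⟨convex_univ, fun y₁ hy₁ y₂ hy₂ a b ha hb hab => by
      simpa [map_sub, ← add_sub_assoc, add_comm] using hφ.2 hy₁ hy₂ ha hb hab⟩
  simpa using le_convEnv_s8 haffine hg x

theorem convEnv_le_localConvEnv {E : Type*} [NormedAddCommGroup E] [NormedSpace ℝ E]
    {K : Set E} {g : E → ℝ} {z : E} {C : ℝ} (hg : ∀ y, C ≤ g y) (hz : z ∈ K) :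
    convEnv g z ≤ localConvEnv K g z := by
  refine csSup_le ⟨C, fun _ => C, convexOn_const C convex_univ, hg, rfl⟩ ?_
  rintro _ ⟨h, hh, hhg, rfl⟩
  refine le_csInf ⟨g z, mem_iUnion_of_mem 1 (apply_mem_convexCombValues hz)⟩ fun v hv => ?_
  obtain ⟨k, hk⟩ := mem_iUnion.1 hv
  exact hh.le_of_mem_convexCombValues (subset_univ K) (fun y _ => hhg y) hk

section Caratheodory

variable {E : Type*} [NormedAddCommGroup E] [NormedSpace ℝ E]
variable {K : Set E} {g : E → ℝ} {z : E} {v : ℝ}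

theorem exists_affine_relation [FiniteDimensional ℝ E] {ι : Type*} [Fintype ι] (y : ι → E)
    (hcard : Module.finrank ℝ E + 1 < Fintype.card ι) :
    ∃ σ : ι → ℝ, ∑ i, σ i = 0 ∧ ∑ i, σ i • y i = 0 ∧ ∃ i, σ i ≠ 0 := by
  have hdep : ¬ AffineIndependent ℝ y := fun hy => by
    have := hy.card_le_finrank_succ.trans
      (Nat.succ_le_succ (Submodule.finrank_le (vectorSpan ℝ (range y))))
    omega
  rw [affineIndependent_iff_of_fintype] at hdep
  push Not at hdep
  obtain ⟨σ, hσ, hvsub, hne⟩ := hdep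
  exact ⟨σ, hσ, by rwa [Finset.weightedVSub_eq_linear_combination _ hσ] at hvsub, hne⟩

theorem sum_mem_convexCombValues_of_eq_zero {k : ℕ} {τ : Fin (k + 1) → ℝ}
    {y : Fin (k + 1) → E} (i₀ : Fin (k + 1)) (hτ : ∀ i, 0 ≤ τ i) (h1 : ∑ i, τ i = 1)
    (hz : ∑ i, τ i • y i = z) (hyK : ∀ i, y i ∈ K) (h0 : τ i₀ = 0) :
    ∑ i, τ i * g (y i) ∈ convexCombValues (Fin k) K g z := by
  rw [Fin.sum_univ_succAbove _ i₀, h0] at h1 hz ⊢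
  refine ⟨fun j => τ (i₀.succAbove j), fun j => y (i₀.succAbove j), fun _ => hτ _, ?_, ?_,
    fun _ => hyK _, ?_⟩ <;> simp_all

theorem convexCombValues_subset_of_le {k m : ℕ} (hkm : k + 1 ≤ m) :
    convexCombValues (Fin (k + 1)) K g z ⊆ convexCombValues (Fin m) K g z := by
  induction m, hkm using Nat.le_induction with
  | base => exact subset_rfl
  | succ m hkm ih =>
    intro v hv
    obtain ⟨τ, y, hτ, h1, rfl, hyK, rfl⟩ := ih hv
    have hy₀ := hyK ⟨0, by omega⟩
    refine ⟨Fin.snoc τ 0, Fin.snoc y (y ⟨0, by omega⟩), Fin.lastCases ?_ ?_, ?_, ?_,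
      Fin.lastCases ?_ ?_, ?_⟩ <;> simp_all [Fin.sum_univ_castSucc]

theorem exists_le_of_mem_convexCombValues_succ [FiniteDimensional ℝ E] {k : ℕ}
    (hk : Module.finrank ℝ E + 1 < k + 1) (hv : v ∈ convexCombValues (Fin (k + 1)) K g z) :
    ∃ w ∈ convexCombValues (Fin k) K g z, w ≤ v := by
  obtain ⟨τ, y, hτ, h1, hz, hyK, rfl⟩ := hv
  obtain ⟨σ, hσ1, hσy, hσne⟩ := exists_affine_relation y (by simpa using hk)
  -- orient `σ` so that moving the weights along `-σ` does not increase the value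
  wlog hσg : 0 ≤ ∑ i, σ i * g (y i) generalizing σ
  · refine this (-σ) (by simp [hσ1]) (by simp [neg_smul, hσy]) ?_ ?_
    · obtain ⟨i, hi⟩ := hσne
      exact ⟨i, neg_ne_zero.2 hi⟩
    · simp only [Pi.neg_apply, neg_mul, Finset.sum_neg_distrib]
      linarith
  have hpos : (Finset.univ.filter fun i => 0 < σ i).Nonempty := by
    by_contra! hnone
    obtain ⟨i, hi⟩ := hσne
    have hle : ∀ i ∈ Finset.univ, σ i ≤ 0 := fun j _ => by
      by_contra! hj
      exact (Finset.filter_eq_empty_iff.1 hnone) (Finset.mem_univ j) hj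
    exact hi ((Finset.sum_eq_zero_iff_of_nonpos hle).1 hσ1 i (Finset.mem_univ i))
  -- the largest step along `-σ` that keeps all weights nonnegative kills the weight at `i₀`
  obtain ⟨i₀, hi₀, hmin⟩ := Finset.exists_min_image _ (fun i => τ i / σ i) hpos
  have hσi₀ : 0 < σ i₀ := (Finset.mem_filter.1 hi₀).2
  set t := τ i₀ / σ i₀
  have ht : 0 ≤ t := div_nonneg (hτ i₀) hσi₀.le
  have hτ' : ∀ i, 0 ≤ τ i - t * σ i := fun i => by
    rcases le_or_gt (σ i) 0 with hi | hi
    · nlinarith [hτ i]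
    · have := hmin i (Finset.mem_filter.2 ⟨Finset.mem_univ i, hi⟩)
      rw [le_div_iff₀ hi] at this
      linarith
  refine ⟨_, sum_mem_convexCombValues_of_eq_zero i₀ hτ' ?_ ?_ hyK ?_, ?_⟩
  · simp [Finset.sum_sub_distrib, ← Finset.mul_sum, hσ1, h1]
  · simp [sub_smul, Finset.sum_sub_distrib, mul_smul, ← Finset.smul_sum, hσy, hz]
  · simp [t, div_mul_cancel₀ _ hσi₀.ne']
  · simp only [sub_mul, Finset.sum_sub_distrib, mul_assoc, ← Finset.mul_sum]
    nlinarith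

theorem exists_le_of_mem_convexCombValues [FiniteDimensional ℝ E] {d k : ℕ}
    (hd : Module.finrank ℝ E ≤ d) (hv : v ∈ convexCombValues (Fin k) K g z) :
    ∃ w ∈ convexCombValues (Fin (d + 1)) K g z, w ≤ v := by
  induction k generalizing v with
  | zero =>
    obtain ⟨τ, -, -, h1, -⟩ := hv
    simp at h1
  | succ k ih =>
    rcases le_or_gt (k + 1) (d + 1) with hk | hk
    · exact ⟨v, convexCombValues_subset_of_le hk hv, le_rfl⟩
    · obtain ⟨w, hw, hwv⟩ := exists_le_of_mem_convexCombValues_succ (by omega) hv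
      obtain ⟨u, hu, huw⟩ := ih hw
      exact ⟨u, hu, huw.trans hwv⟩

theorem csInf_convexCombValues_eq_localConvEnv [FiniteDimensional ℝ E] {C : ℝ} {d : ℕ}
    (hd : Module.finrank ℝ E ≤ d) (hg : ∀ y ∈ K, C ≤ g y) (hz : z ∈ K) :
    sInf (convexCombValues (Fin (d + 1)) K g z) = localConvEnv K g z := by
  refine le_antisymm (le_csInf ⟨g z, mem_iUnion_of_mem 1 (apply_mem_convexCombValues hz)⟩ ?_)
    (le_csInf ⟨g z, convexCombValues_subset_of_le (by omega) (apply_mem_convexCombValues hz)⟩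
      fun v hv => localConvEnv_le_of_mem hg hv)
  intro v hv
  obtain ⟨k, hk⟩ := mem_iUnion.1 hv
  obtain ⟨w, hw, hwv⟩ := exists_le_of_mem_convexCombValues hd hk
  exact (csInf_le ⟨C, fun _ hu => le_of_mem_convexCombValues hg hu⟩ hw).trans hwv

end Caratheodory

theorem ConvexOn.exists_le_of_isOpen {E : Type*} [NormedAddCommGroup E] [NormedSpace ℝ E]
    [FiniteDimensional ℝ E] {s : Set E} {F : E → ℝ} (hs : IsOpen s) (hF : ConvexOn ℝ s F)
    {x : E} (hx : x ∈ s) : ∃ φ : E →L[ℝ] ℝ, ∀ y ∈ s, F x + φ (y - x) ≤ F y := by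
  set epi : Set (E × ℝ) := {p | p.1 ∈ s ∧ F p.1 < p.2}
  have hopen : IsOpen epi := by
    have hcont : ContinuousOn (fun p : E × ℝ => F p.1 - p.2) (s ×ˢ univ) :=
      ((hF.continuousOn hs).comp continuousOn_fst fun p hp => hp.1).sub continuousOn_snd
    convert hcont.isOpen_inter_preimage (hs.prod isOpen_univ) (isOpen_Iio (a := 0)) using 1
    ext p
    simp [epi, sub_neg]
  obtain ⟨Φ, hΦ⟩ := geometric_hahn_banach_open_point hF.convex_strict_epigraph hopen
    (fun h : (x, F x) ∈ epi => lt_irrefl _ h.2)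
  have hsplit : ∀ y t, Φ (y, t) = Φ (y, 0) + t * Φ (0, 1) := fun y t => by
    rw [← smul_eq_mul, ← map_smul, ← map_add, Prod.smul_mk, smul_zero, smul_eq_mul, mul_one,
      Prod.mk_add_mk, add_zero, zero_add]
  have hc : Φ (0, 1) < 0 := by
    have h := hΦ (x, F x + 1) ⟨hx, lt_add_one _⟩
    rw [hsplit, hsplit x (F x)] at h
    linarith
  refine ⟨(-Φ (0, 1))⁻¹ • Φ.comp (ContinuousLinearMap.inl ℝ E ℝ), fun y hy => ?_⟩
  refine le_of_forall_gt_imp_ge_of_dense fun t ht => ?_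
  have h := hΦ (y, t) ⟨hy, ht⟩
  rw [hsplit, hsplit x (F x)] at h
  have hsub : Φ (y - x, 0) = Φ (y, 0) - Φ (x, 0) := by
    rw [← map_sub, Prod.mk_sub_mk, sub_zero]
  have key : (-Φ (0, 1))⁻¹ * Φ (y - x, 0) ≤ t - F x := by
    rw [inv_mul_le_iff₀ (neg_pos.2 hc), hsub]
    linarith
  simpa using key

theorem sub_sq_div_le_add_mul_norm_sq {E : Type*} [NormedAddCommGroup E] {f : E → ℝ}
    {L lam : ℝ} {x : E} (hlam : 0 < lam) (hf : ∀ y, |f y - f x| ≤ L * ‖y - x‖) (y : E) :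
    f x - L ^ 2 / (4 * lam) ≤ f y + lam * ‖y - x‖ ^ 2 := by
  have hfy := neg_le_of_abs_le (hf y)
  have hsq : 0 ≤ (2 * lam * ‖y - x‖ - L) ^ 2 / (4 * lam) := by positivity
  have hid : (2 * lam * ‖y - x‖ - L) ^ 2 / (4 * lam) =
      lam * ‖y - x‖ ^ 2 - L * ‖y - x‖ + L ^ 2 / (4 * lam) := by
    field_simp
    ring
  linarith

section Localization

variable {E : Type*} [NormedAddCommGroup E] [NormedSpace ℝ E]
variable {f : E → ℝ} {L lam R c : ℝ} {x : E} {φ : E →L[ℝ] ℝ}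

theorem le_two_mul_norm_of_le_on_ball (hL : 0 < L) (hlam : 0 < lam) (hR : L < 2 * lam * R)
    (hf : ∀ y, |f y - f x| ≤ L * ‖y - x‖) (hc : f x - L ^ 2 / (4 * lam) ≤ c)
    (hball : ∀ y ∈ ball x R, c + φ (y - x) ≤ f y + lam * ‖y - x‖ ^ 2) (v : E) :
    φ v ≤ 2 * L * ‖v‖ := by
  rcases eq_or_ne v 0 with rfl | hv
  · simp
  -- at distance `s = L / (2λ)` the error terms `L² / (4λ) + L s + λ s²` add up to `2 L s`
  set s := L / (2 * lam)
  have hv' : 0 < ‖v‖ := norm_pos_iff.2 hv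
  have hs : 0 < s := by positivity
  have hr : 0 < s / ‖v‖ := div_pos hs hv'
  have hnorm : ‖x + (s / ‖v‖) • v - x‖ = s := by
    rw [add_sub_cancel_left, norm_smul, Real.norm_of_nonneg hr.le, div_mul_cancel₀ _ hv'.ne']
  have hy := hball (x + (s / ‖v‖) • v) (by
    rw [mem_ball, dist_eq_norm, hnorm, div_lt_iff₀ (by positivity)]
    linarith)
  rw [hnorm, add_sub_cancel_left, map_smul, smul_eq_mul] at hy
  have hfy := le_of_abs_le (hf (x + (s / ‖v‖) • v))
  rw [hnorm] at hfy
  have hid : s / ‖v‖ * (2 * L * ‖v‖) = L ^ 2 / (4 * lam) + L * s + lam * s ^ 2 := by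
    simp only [s]
    field_simp
    ring
  exact le_of_mul_le_mul_left (by linarith) hr

theorem add_apply_sub_le_of_le_on_ball (hL : 0 < L) (hlam : 0 < lam) (hR : 3 * L ≤ lam * R)
    (hf : ∀ y, |f y - f x| ≤ L * ‖y - x‖) (hc : f x - L ^ 2 / (4 * lam) ≤ c) (hcx : c ≤ f x)
    (hball : ∀ y ∈ ball x R, c + φ (y - x) ≤ f y + lam * ‖y - x‖ ^ 2) (y : E) :
    c + φ (y - x) ≤ f y + lam * ‖y - x‖ ^ 2 := by
  by_cases hy : y ∈ ball x R
  · exact hball y hy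
  rw [mem_ball, dist_eq_norm, not_lt] at hy
  have hφ := le_two_mul_norm_of_le_on_ball hL hlam (by nlinarith) hf hc hball (y - x)
  have hfy := neg_le_of_abs_le (hf y)
  have ht := mul_le_mul_of_nonneg_right (hR.trans (mul_le_mul_of_nonneg_left hy hlam.le))
    (norm_nonneg (y - x))
  nlinarith

end Localization

theorem stmt_8 {n : ℕ} (f : EuclideanSpace ℝ (Fin n) → ℝ) (L : ℝ) (hL : 0 < L)
    (hf : ∀ x y, |f x - f y| ≤ L * ‖x - y‖) (lam : ℝ) (hlam : 0 < lam)
    (x : EuclideanSpace ℝ (Fin n)) :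
    convEnv (fun y => f y + lam * ‖y - x‖ ^ 2) x =
      sInf {v : ℝ | ∃ (τ : Fin (n + 1) → ℝ) (y : Fin (n + 1) → EuclideanSpace ℝ (Fin n)),
        (∀ i, 0 ≤ τ i) ∧ (∑ i, τ i) = 1 ∧ (∑ i, τ i • y i) = x ∧
        (∀ i, ‖y i - x‖ ≤ (2 + Real.sqrt 2) * L / lam) ∧
        v = ∑ i, τ i * (f (y i) + lam * ‖y i - x‖ ^ 2)} := by
  set g := fun y => f y + lam * ‖y - x‖ ^ 2
  set R := (2 + Real.sqrt 2) * L / lam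
  have hR : 3 * L ≤ lam * R := by
    rw [mul_div_cancel₀ _ hlam.ne']
    nlinarith [Real.one_lt_sqrt_two]
  have hRpos : 0 < R := by positivity
  have hfx : ∀ y, |f y - f x| ≤ L * ‖y - x‖ := fun y => hf y x
  have hg : ∀ y, f x - L ^ 2 / (4 * lam) ≤ g y := sub_sq_div_le_add_mul_norm_sq hlam hfx
  have hxK : x ∈ closedBall x R := mem_closedBall_self hRpos.le
  change convEnv g x = sInf (convexCombValues (Fin (n + 1)) (closedBall x R) g x)
  rw [csInf_convexCombValues_eq_localConvEnv finrank_euclideanSpace_fin.le (fun y _ => hg y) hxK]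
  set c := localConvEnv (closedBall x R) g x
  refine le_antisymm (convEnv_le_localConvEnv hg hxK) ?_
  obtain ⟨φ, hφ⟩ := ConvexOn.exists_le_of_isOpen isOpen_ball
    ((convexOn_localConvEnv (convex_closedBall x R) fun y _ => hg y).subset
      ball_subset_closedBall (convex_ball x R)) (mem_ball_self hRpos)
  have hball : ∀ y ∈ ball x R, c + φ (y - x) ≤ g y := fun y hy =>
    (hφ y hy).trans (localConvEnv_le_apply (fun y _ => hg y) (ball_subset_closedBall hy))
  have hcx : c ≤ f x := by
    simpa [g] using localConvEnv_le_apply (fun y _ => hg y) hxK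
  exact le_convEnv_of_affine_le (add_apply_sub_le_of_le_on_ball hL hlam hR hfx
    (le_localConvEnv (fun y _ => hg y) hxK) hcx hball)
end

section
/- Let S ⊂ ℝⁿ be a nonempty compact convex set with more than one element, with minimal bounding sphere of radius r > 0 centered at −a ∈ ℝⁿ. Let σ(x) = max{p·x : p ∈ S}. Then for every 0 ≤ ε < min{1, r} and λ > 0, C^u_λ(σ − ε|·|)(0) = (r − ε)²/(4λ). -/
open Filter Metric Set
open scoped Topology RealInnerProductSpace

lemma exists_subgradient {E : Type*} [NormedAddCommGroup E] [InnerProductSpace ℝ E]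
    [FiniteDimensional ℝ E] (h : E → ℝ) (hh : ConvexOn ℝ Set.univ h) :
    ∃ v : E, ∀ y, h 0 + ⟪v, y⟫ ≤ h y := by
  have hcont : Continuous h := hh.locallyLipschitz.continuous
  set U : Set (E × ℝ) := {p : E × ℝ | p.1 ∈ Set.univ ∧ h p.1 < p.2} with hU
  have hUo : IsOpen U := by
    have : U = {p : E × ℝ | h p.1 < p.2} := by ext p; simp [hU]
    rw [this]
    exact isOpen_lt (hcont.comp continuous_fst) continuous_snd
  have hUc : Convex ℝ U := hh.convex_strict_epigraph
  have hx : ((0 : E), h 0) ∉ U := by simp [hU]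
  obtain ⟨f, hf⟩ := geometric_hahn_banach_open_point hUc hUo hx
  set c : ℝ := f ((0 : E), (1 : ℝ)) with hcdef
  have hdec : ∀ (y : E) (s : ℝ), f (y, s) = f (y, 0) + s * c := by
    intro y s
    have : (y, s) = (y, (0 : ℝ)) + s • ((0 : E), (1 : ℝ)) := by
      simp [Prod.ext_iff]
    rw [this, map_add, map_smul, smul_eq_mul]
  have h00 : f ((0 : E), (0 : ℝ)) = 0 := by
    have : ((0 : E), (0 : ℝ)) = (0 : E × ℝ) := rfl
    rw [this, map_zero]
  have key : ∀ (y : E) (s : ℝ), h y < s → f (y, 0) + s * c < h 0 * c := by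
    intro y s hs
    have := hf (y, s) ⟨trivial, hs⟩
    rw [hdec y s, hdec 0 (h 0), h00] at this
    linarith
  have hc : c < 0 := by
    have := key 0 (h 0 + 1) (by linarith)
    rw [h00] at this
    linarith
  have key2 : ∀ y : E, f (y, 0) + h y * c ≤ h 0 * c := by
    intro y
    by_contra hlt
    push_neg at hlt
    set d : ℝ := f (y, 0) + h y * c - h 0 * c with hd
    have hd0 : 0 < d := by simp [hd]; linarith
    have hc2 : (0:ℝ) < -2 * c := by linarith
    have hdiv : 0 < d / (-2 * c) := div_pos hd0 hc2
    have hs : h y < h y + d / (-2 * c) := by linarith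
    have hkey := key y (h y + d / (-2 * c)) hs
    have h1 : d / (-2 * c) * (-2 * c) = d := div_mul_cancel₀ d (ne_of_gt hc2)
    have hdc : d / (-2 * c) * c = -(d / 2) := by linear_combination (-(1:ℝ)/2) * h1
    nlinarith [hkey]
  refine ⟨(InnerProductSpace.toDual ℝ E).symm
      ((-c)⁻¹ • (f.comp (ContinuousLinearMap.inl ℝ E ℝ))), fun y => ?_⟩
  rw [InnerProductSpace.toDual_symm_apply]
  have hval : ((-c)⁻¹ • (f.comp (ContinuousLinearMap.inl ℝ E ℝ))) y = (-c)⁻¹ * f (y, 0) := by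
    simp [ContinuousLinearMap.smul_apply, ContinuousLinearMap.comp_apply]
  rw [hval]
  have hnc : (0:ℝ) < -c := by linarith
  have h2 := key2 y
  have h3 : (-c)⁻¹ * f (y, 0) ≤ h y - h 0 := by
    rw [inv_mul_le_iff₀ hnc]
    nlinarith
  linarith

lemma exists_touch {E : Type*} [NormedAddCommGroup E] [InnerProductSpace ℝ E]
    (S : Set E) (hSc : IsCompact S) (a : E) (r : ℝ) (hr : 0 < r)
    (hmin : IsMinBall S (-a) r) (u : E) :
    ∃ p ∈ S, dist p (-a) = r ∧ ⟪u, p + a⟫ ≤ 0 := by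
  by_contra hcon
  push_neg at hcon
  -- hcon : ∀ p ∈ S, dist p (-a) = r → 0 < ⟪u, p + a⟫
  have hcontg : Continuous fun p : E => ⟪u, p + a⟫ :=
    Continuous.inner continuous_const (continuous_id.add continuous_const)
  set T : Set E := {p | p ∈ S ∧ dist p (-a) = r} with hT
  have hTc : IsCompact T := by
    have : T = S ∩ (fun p => dist p (-a)) ⁻¹' {r} := by ext p; simp [hT]
    rw [this]
    exact hSc.inter_right (isClosed_singleton.preimage (continuous_id.dist continuous_const))
  obtain ⟨δ, hδ0, hδT⟩ : ∃ δ : ℝ, 0 < δ ∧ ∀ p ∈ T, δ ≤ ⟪u, p + a⟫ := by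
    rcases T.eq_empty_or_nonempty with hTe | hTn
    · exact ⟨1, one_pos, by simp [hTe]⟩
    · obtain ⟨p₁, hp₁, hp₁min⟩ := hTc.exists_isMinOn hTn hcontg.continuousOn
      exact ⟨⟪u, p₁ + a⟫, hcon p₁ hp₁.1 hp₁.2, fun p hp => hp₁min hp⟩
  set F : Set E := {p | p ∈ S ∧ ⟪u, p + a⟫ ≤ δ / 2} with hF
  have hFc : IsCompact F := by
    have : F = S ∩ (fun p => ⟪u, p + a⟫) ⁻¹' (Set.Iic (δ / 2)) := by ext p; simp [hF]
    rw [this]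
    exact hSc.inter_right (isClosed_Iic.preimage hcontg)
  obtain ⟨ρ, hρ0, hρr, hρF⟩ : ∃ ρ : ℝ, 0 ≤ ρ ∧ ρ < r ∧ ∀ p ∈ F, dist p (-a) ≤ ρ := by
    rcases F.eq_empty_or_nonempty with hFe | hFn
    · exact ⟨0, le_refl _, hr, by simp [hFe]⟩
    · obtain ⟨p₂, hp₂, hp₂max⟩ := hFc.exists_isMaxOn hFn
        ((continuous_id.dist continuous_const).continuousOn)
      refine ⟨dist p₂ (-a), dist_nonneg, ?_, fun p hp => hp₂max hp⟩
      have hle : dist p₂ (-a) ≤ r := by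
        have := hmin.2.1 hp₂.1
        rwa [Metric.mem_closedBall] at this
      rcases lt_or_eq_of_le hle with h | h
      · exact h
      · exfalso
        have : δ ≤ ⟪u, p₂ + a⟫ := hδT p₂ ⟨hp₂.1, h⟩
        have := hp₂.2
        linarith
  set G : ℝ := ‖u‖ * r with hG
  have hG0 : 0 ≤ G := mul_nonneg (norm_nonneg _) hr.le
  have hGb : ∀ p ∈ S, |⟪u, p + a⟫| ≤ G := by
    intro p hp
    have h1 : |⟪u, p + a⟫| ≤ ‖u‖ * ‖p + a‖ := abs_real_inner_le_norm u (p + a)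
    have h2 : ‖p + a‖ ≤ r := by
      have := hmin.2.1 hp
      rw [Metric.mem_closedBall, dist_eq_norm, sub_neg_eq_add] at this
      exact this
    calc |⟪u, p + a⟫| ≤ ‖u‖ * ‖p + a‖ := h1
      _ ≤ ‖u‖ * r := by gcongr
      _ = G := rfl
  have hρ2 : ρ ^ 2 < r ^ 2 := by nlinarith
  set t : ℝ := min (δ / (2 * ‖u‖ ^ 2 + 1)) ((r ^ 2 - ρ ^ 2) / (2 * (2 * G + δ))) with ht
  have ht0 : 0 < t := by
    apply lt_min
    · positivity
    · apply div_pos (by linarith) (by positivity)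
  have ht1 : t * ‖u‖ ^ 2 ≤ δ / 2 := by
    have h1 : t ≤ δ / (2 * ‖u‖ ^ 2 + 1) := min_le_left _ _
    have h2 : t * (2 * ‖u‖ ^ 2 + 1) ≤ δ := by
      rw [← le_div_iff₀ (by positivity)]
      exact h1
    nlinarith [sq_nonneg ‖u‖]
  have ht2 : t * (2 * G + δ) ≤ (r ^ 2 - ρ ^ 2) / 2 := by
    have h1 : t ≤ (r ^ 2 - ρ ^ 2) / (2 * (2 * G + δ)) := min_le_right _ _
    have h2 : t * (2 * (2 * G + δ)) ≤ r ^ 2 - ρ ^ 2 := by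
      rw [← le_div_iff₀ (by positivity)]
      exact h1
    linarith
  -- distance formula
  have hdist : ∀ p : E, dist p (-a + t • u) ^ 2
      = dist p (-a) ^ 2 - 2 * t * ⟪u, p + a⟫ + t ^ 2 * ‖u‖ ^ 2 := by
    intro p
    have he : p - (-a + t • u) = (p + a) - t • u := by abel
    rw [dist_eq_norm, he, @norm_sub_sq_real, dist_eq_norm, sub_neg_eq_add]
    rw [real_inner_smul_right, norm_smul, mul_pow, real_inner_comm]
    have : ‖t‖ ^ 2 = t ^ 2 := by rw [Real.norm_eq_abs, sq_abs]
    rw [this]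
    ring
  set R2 : ℝ := max (r ^ 2 - t * δ / 2) ((r ^ 2 + ρ ^ 2) / 2) with hR2
  have hR2r : R2 < r ^ 2 := by
    apply max_lt
    · nlinarith
    · nlinarith
  have hR2nn : 0 ≤ R2 := le_trans (by positivity) (le_max_right _ _)
  have key : ∀ p ∈ S, dist p (-a + t • u) ^ 2 ≤ R2 := by
    intro p hp
    rw [hdist p]
    by_cases hpF : ⟪u, p + a⟫ ≤ δ / 2
    · have h1 : dist p (-a) ≤ ρ := hρF p ⟨hp, hpF⟩
      have h2 : |⟪u, p + a⟫| ≤ G := hGb p hp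
      have h3 : dist p (-a) ^ 2 ≤ ρ ^ 2 := by nlinarith [dist_nonneg (x := p) (y := -a)]
      have h4 : - ⟪u, p + a⟫ ≤ G := by cases abs_le.mp h2; linarith
      refine le_trans ?_ (le_max_right _ _)
      have h5 : t ^ 2 * ‖u‖ ^ 2 = t * (t * ‖u‖ ^ 2) := by ring
      nlinarith [ht1, ht2]
    · push_neg at hpF
      have h1 : dist p (-a) ≤ r := by
        have := hmin.2.1 hp; rwa [Metric.mem_closedBall] at this
      have h3 : dist p (-a) ^ 2 ≤ r ^ 2 := by nlinarith [dist_nonneg (x := p) (y := -a)]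
      refine le_trans ?_ (le_max_left _ _)
      nlinarith [ht1]
  have hsub : S ⊆ Metric.closedBall (-a + t • u) (Real.sqrt R2) := by
    intro p hp
    rw [Metric.mem_closedBall]
    have h1 := key p hp
    have := Real.sqrt_le_sqrt h1
    rwa [Real.sqrt_sq dist_nonneg] at this
  have hrle : r ≤ Real.sqrt R2 := hmin.2.2 _ _ hsub
  have hlt : Real.sqrt R2 < r := by
    have := Real.sqrt_lt_sqrt hR2nn hR2r
    rwa [Real.sqrt_sq hr.le] at this
  linarith

theorem stmt_9 {n : ℕ} (S : Set (EuclideanSpace ℝ (Fin n))) (hS : S.Nonempty)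
    (hSc : IsCompact S) (hScv : Convex ℝ S)
    (hS2 : ∃ p ∈ S, ∃ q ∈ S, p ≠ q)
    (a : EuclideanSpace ℝ (Fin n)) (r : ℝ) (hr : 0 < r)
    (hmin : IsMinBall S (-a) r)
    (ε : ℝ) (hε0 : 0 ≤ ε) (hε : ε < min 1 r) (lam : ℝ) (hlam : 0 < lam) :
    upperT lam (fun x => sSup {t : ℝ | ∃ p ∈ S, t = ⟪p, x⟫} - ε * ‖x‖) 0 =
      (r - ε) ^ 2 / (4 * lam) := by
  have hrε : 0 < r - ε := sub_pos.mpr ((lt_min_iff.mp hε).2)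
  set σ : EuclideanSpace ℝ (Fin n) → ℝ :=
    fun x => sSup {t : ℝ | ∃ p ∈ S, t = ⟪p, x⟫} with hσ
  have himg : ∀ x, {t : ℝ | ∃ p ∈ S, t = ⟪p, x⟫} = (fun p => ⟪p, x⟫) '' S := by
    intro x; ext t; simp [eq_comm]
  have hcpt : ∀ x, IsCompact ((fun p => ⟪p, x⟫) '' S) :=
    fun x => hSc.image (Continuous.inner continuous_id continuous_const)
  have hub : ∀ x, ∀ p ∈ S, ⟪p, x⟫ ≤ σ x := by
    intro x p hp
    rw [hσ]; dsimp only; rw [himg x]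
    exact le_csSup (hcpt x).bddAbove ⟨p, hp, rfl⟩
  have hex : ∀ x, ∃ p ∈ S, σ x = ⟪p, x⟫ := by
    intro x
    have hmem := (hcpt x).sSup_mem (hS.image _)
    rw [hσ]; dsimp only; rw [himg x]
    obtain ⟨p, hp, he⟩ := hmem
    exact ⟨p, hp, he.symm⟩
  have hball : ∀ p ∈ S, ‖p + a‖ ≤ r := by
    intro p hp
    have := hmin.2.1 hp
    rwa [Metric.mem_closedBall, dist_eq_norm, sub_neg_eq_add] at this
  have hσle : ∀ x, σ x ≤ -⟪a, x⟫ + r * ‖x‖ := by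
    intro x
    obtain ⟨p, hp, hpe⟩ := hex x
    rw [hpe]
    have h1 : ⟪p, x⟫ = ⟪p + a, x⟫ - ⟪a, x⟫ := by
      rw [← inner_sub_left]; congr 1; abel
    have h2 : ⟪p + a, x⟫ ≤ ‖p + a‖ * ‖x‖ := real_inner_le_norm _ _
    have h3 : ‖p + a‖ * ‖x‖ ≤ r * ‖x‖ :=
      mul_le_mul_of_nonneg_right (hball p hp) (norm_nonneg x)
    linarith
  set C : ℝ := (r - ε) ^ 2 / (4 * lam) with hC
  have hC4 : 4 * lam * C = (r - ε) ^ 2 := by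
    rw [hC]; field_simp
  set A : Set ℝ := {y | ∃ h : EuclideanSpace ℝ (Fin n) → ℝ, ConvexOn ℝ Set.univ h ∧
    (∀ z, h z ≤ lam * ‖z‖ ^ 2 - (σ z - ε * ‖z‖)) ∧ y = h 0} with hA
  have hAmem : -C ∈ A := by
    refine ⟨fun y => ⟪a, y⟫ - C, ⟨convex_univ, ?_⟩, ?_, by simp⟩
    · intro x _ y _ α β hα hβ hαβ
      dsimp only
      simp only [smul_eq_mul]
      rw [inner_add_right, real_inner_smul_right, real_inner_smul_right]
      have : α * C + β * C = C := by rw [← add_mul, hαβ, one_mul]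
      linarith
    · intro z
      dsimp only
      have h1 := hσle z
      nlinarith [sq_nonneg (2 * lam * ‖z‖ - (r - ε)), norm_nonneg z]
  have hAbdd : BddAbove A := by
    refine ⟨lam * ‖(0 : EuclideanSpace ℝ (Fin n))‖ ^ 2 - (σ 0 - ε * ‖(0 : EuclideanSpace ℝ (Fin n))‖), ?_⟩
    rintro y ⟨h, hc, hle, rfl⟩
    exact hle 0
  have hupA : ∀ y ∈ A, y ≤ -C := by
    rintro y ⟨h, hcv, hle, rfl⟩
    obtain ⟨v, hv⟩ := exists_subgradient h hcv
    obtain ⟨p, hpS, hpr, hpu⟩ := exists_touch S hSc a r hr hmin (a - v)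
    set q : EuclideanSpace ℝ (Fin n) := p + a with hqdef
    have hq : ‖q‖ = r := by rw [hqdef, ← sub_neg_eq_add, ← dist_eq_norm, hpr]
    set s : ℝ := (r - ε) / (2 * lam * r) with hs
    have hs0 : 0 < s := div_pos hrε (by positivity)
    have hy := hv (s • q)
    have hfy := hle (s • q)
    have hnorm : ‖s • q‖ = s * r := by
      rw [norm_smul, Real.norm_eq_abs, abs_of_pos hs0, hq]
    have hσy : s * (r ^ 2 - ⟪a, q⟫) ≤ σ (s • q) := by
      have h1 := hub (s • q) p hpS
      have h2 : ⟪p, s • q⟫ = s * (r ^ 2 - ⟪a, q⟫) := by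
        rw [real_inner_smul_right]
        congr 1
        have hpq : p = q - a := by rw [hqdef]; abel
        rw [hpq, inner_sub_left, real_inner_self_eq_norm_sq, hq]
      linarith
    have hvq : ⟪a, q⟫ ≤ ⟪v, q⟫ := by
      have h1 : ⟪a - v, q⟫ = ⟪a, q⟫ - ⟪v, q⟫ := inner_sub_left a v q
      rw [hqdef] at h1
      linarith [hpu]
    have hinner : ⟪v, s • q⟫ = s * ⟪v, q⟫ := real_inner_smul_right v q s
    have hid : lam * (s * r) ^ 2 - s * r ^ 2 + ε * (s * r) = -C := by
      rw [hs, hC]; field_simp; ring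
    rw [hnorm] at hfy
    rw [hinner] at hy
    nlinarith [mul_nonneg hs0.le (sub_nonneg.mpr hvq)]
  have hconv : sSup A = -C :=
    le_antisymm (csSup_le ⟨-C, hAmem⟩ hupA) (le_csSup hAbdd hAmem)
  show lam * ‖(0 : EuclideanSpace ℝ (Fin n))‖ ^ 2 - sSup A = C
  rw [hconv, norm_zero]
  ring
end
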